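/- Let S be a submonoid of ℕ^d and let b ∈ S \ {0}. Then PF(S) ≠ ∅ if and only if Ap(S, b) has a ≼_S-maximal element. Moreover, PF(S) = {a − b : a is a ≼_S-maximal element of Ap(S, b)} (differences taken in ℤ^d). -/

import Mathlib

/-! The Apéry set `Ap(S, b)` is exactly `S ∩ (H(S) + b)`: an element of it lies above `b`
because the cone `pos(S)` sits in the nonnegative orthant. Translating by `b` therefore turns
`≼_S`-maximality in `Ap(S, b)` into the pseudo-Frobenius condition. If `g + s` were a gap for
some `s ∈ S \ {0}`, then `g + b + s` would be a strictly larger element of `Ap(S, b)`; conversely,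
for `g ∈ PF(S)` every `a = g + b + s` with `s ∈ S \ {0}` has `a - b = g + s ∈ S`, so `a ∉ Ap(S, b)`. -/

open scoped BigOperators

/-- The natural cast of an element of `ℕ^d` into `ℚ^d`. -/
def toQ {d : ℕ} (x : Fin d → ℕ) : Fin d → ℚ := fun i => (x i : ℚ)

/-- The natural cast of an element of `ℕ^d` into `ℤ^d`. -/
def natToZ {d : ℕ} (x : Fin d → ℕ) : Fin d → ℤ := fun i => (x i : ℤ)

/-- The cone `pos(S)` of a submonoid `S ⊆ ℕ^d`: all nonnegative rational
combinations of elements of `S`, as a subset of `ℚ^d`. -/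
def posCone {d : ℕ} (S : AddSubmonoid (Fin d → ℕ)) : Set (Fin d → ℚ) :=
  {q | ∃ (k : ℕ) (c : Fin k → ℚ) (s : Fin k → (Fin d → ℕ)),
    (∀ i, 0 ≤ c i) ∧ (∀ i, s i ∈ S) ∧ q = ∑ i, c i • toQ (s i)}

/-- The gap set `H(S) = (pos(S) \ S) ∩ ℕ^d`. -/
def gaps {d : ℕ} (S : AddSubmonoid (Fin d → ℕ)) : Set (Fin d → ℕ) :=
  {x | toQ x ∈ posCone S ∧ x ∉ S}

/-- The set of pseudo-Frobenius elements of `S`. -/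
def PF {d : ℕ} (S : AddSubmonoid (Fin d → ℕ)) : Set (Fin d → ℕ) :=
  {a | a ∈ gaps S ∧ ∀ s ∈ S, s ≠ 0 → a + s ∈ S}

/-- A term order on `ℕ^d`: a total order compatible with addition for which
`0` is the least element. -/
def IsTermOrder {d : ℕ} (r : (Fin d → ℕ) → (Fin d → ℕ) → Prop) : Prop :=
  (∀ a b, r a b ∨ r b a) ∧ (∀ a b, r a b → r b a → a = b) ∧
    (∀ a b c, r a b → r b c → r a c) ∧ (∀ a, r 0 a) ∧
    (∀ a b c, r a b → r (a + c) (b + c))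

/-- The set of Frobenius elements of `S`: maxima of `H(S)` for some term order. -/
def FrobSet {d : ℕ} (S : AddSubmonoid (Fin d → ℕ)) : Set (Fin d → ℕ) :=
  {f | f ∈ gaps S ∧ ∃ r, IsTermOrder r ∧ ∀ h ∈ gaps S, r h f}

/-- The Apéry set of `S` relative to `b`:
`Ap(S,b) = {a ∈ S : a - b ∈ pos(S) \ S}`, the difference taken in `ℚ^d`. -/
def Apery {d : ℕ} (S : AddSubmonoid (Fin d → ℕ)) (b : Fin d → ℕ) : Set (Fin d → ℕ) :=
  {a | a ∈ S ∧ (toQ a - toQ b) ∈ posCone S ∧ ¬ ∃ s ∈ S, toQ s = toQ a - toQ b}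

/-- The partial order `≼_S`: `x ≼_S y` iff `y - x ∈ S`. -/
def leS {d : ℕ} (S : AddSubmonoid (Fin d → ℕ)) (x y : Fin d → ℕ) : Prop :=
  ∃ s ∈ S, x + s = y

/-- `a` is a `≼_S`-maximal element of `X`. -/
def MaximalIn {d : ℕ} (S : AddSubmonoid (Fin d → ℕ)) (X : Set (Fin d → ℕ))
    (a : Fin d → ℕ) : Prop :=
  a ∈ X ∧ ∀ a' ∈ X, a' ≠ a → ¬ leS S a a'

/-- `S` is irreducible: it is not the intersection of two submonoids of `ℕ^d`
each properly containing it. -/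
def IrreducibleMonoid {d : ℕ} (S : AddSubmonoid (Fin d → ℕ)) : Prop :=
  ¬ ∃ S₁ S₂ : AddSubmonoid (Fin d → ℕ), S < S₁ ∧ S < S₂ ∧
    (S : Set (Fin d → ℕ)) = (S₁ : Set (Fin d → ℕ)) ∩ (S₂ : Set (Fin d → ℕ))

/-- The multiplicity of `S`: componentwise infimum of `S \ {0}`. -/
noncomputable def mult {d : ℕ} (S : AddSubmonoid (Fin d → ℕ)) : Fin d → ℕ :=
  fun i => sInf {n | ∃ s ∈ S, s ≠ 0 ∧ s i = n}

/-- `S` is a PI-monoid: `S = (a + T) ∪ {0}` for some submonoid `T` of `ℕ^d`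
and some `a ∈ T \ {0}`. -/
def IsPIMonoid {d : ℕ} (S : AddSubmonoid (Fin d → ℕ)) : Prop :=
  ∃ (T : AddSubmonoid (Fin d → ℕ)) (a : Fin d → ℕ), a ∈ T ∧ a ≠ 0 ∧
    (S : Set (Fin d → ℕ)) = {x | ∃ t ∈ T, x = a + t} ∪ {0}

/-- `G` is a minimal system of generators of `S`. -/
def IsMinimalGenSet {d : ℕ} (S : AddSubmonoid (Fin d → ℕ)) (G : Set (Fin d → ℕ)) : Prop :=
  AddSubmonoid.closure G = S ∧ ∀ G' ⊂ G, AddSubmonoid.closure G' ≠ S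

section Casts

variable {d : ℕ}

lemma toQ_add (x y : Fin d → ℕ) : toQ (x + y) = toQ x + toQ y := by
  funext i
  simp [toQ]

lemma toQ_injective : Function.Injective (toQ : (Fin d → ℕ) → Fin d → ℚ) := by
  intro x y h
  funext i
  have hi := congrFun h i
  simp only [toQ] at hi
  exact_mod_cast hi

lemma natToZ_add_sub_right (x y : Fin d → ℕ) : natToZ (x + y) - natToZ y = natToZ x := by
  funext i
  simp [natToZ]

end Casts

section PosCone

variable {d : ℕ} {S : AddSubmonoid (Fin d → ℕ)}

lemma toQ_mem_posCone {s : Fin d → ℕ} (hs : s ∈ S) : toQ s ∈ posCone S :=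
  ⟨1, fun _ => 1, fun _ => s, fun _ => zero_le_one, fun _ => hs, by simp⟩

lemma add_mem_posCone {p q : Fin d → ℚ} (hp : p ∈ posCone S) (hq : q ∈ posCone S) :
    p + q ∈ posCone S := by
  obtain ⟨k₁, c₁, s₁, hc₁, hs₁, rfl⟩ := hp
  obtain ⟨k₂, c₂, s₂, hc₂, hs₂, rfl⟩ := hq
  refine ⟨k₁ + k₂, Fin.addCases c₁ c₂, Fin.addCases s₁ s₂, ?_, ?_, ?_⟩
  · exact Fin.addCases (by simpa using hc₁) (by simpa using hc₂)
  · exact Fin.addCases (by simpa using hs₁) (by simpa using hs₂)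
  · simp [Fin.sum_univ_add]

lemma nonneg_of_mem_posCone {q : Fin d → ℚ} (hq : q ∈ posCone S) (i : Fin d) : 0 ≤ q i := by
  obtain ⟨k, c, s, hc, -, rfl⟩ := hq
  simp only [Finset.sum_apply, Pi.smul_apply, smul_eq_mul]
  exact Finset.sum_nonneg fun j _ => mul_nonneg (hc j) (by simp [toQ])

lemma add_mem_gaps {g s : Fin d → ℕ} (hg : g ∈ gaps S) (hs : s ∈ S) (hgs : g + s ∉ S) :
    g + s ∈ gaps S :=
  ⟨by rw [toQ_add]; exact add_mem_posCone hg.1 (toQ_mem_posCone hs), hgs⟩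

end PosCone

section Apery

variable {d : ℕ} {S : AddSubmonoid (Fin d → ℕ)} {b : Fin d → ℕ}

lemma mem_apery_iff {a : Fin d → ℕ} : a ∈ Apery S b ↔ a ∈ S ∧ ∃ g ∈ gaps S, a = g + b := by
  constructor
  · rintro ⟨haS, hcone, hnot⟩
    have hle : b ≤ a := fun i => by
      have := nonneg_of_mem_posCone hcone i
      simp only [Pi.sub_apply, toQ, sub_nonneg] at this
      exact_mod_cast this
    have hsub : toQ (a - b) = toQ a - toQ b := by
      funext i
      simp [toQ, Nat.cast_sub (hle i)]
    refine ⟨haS, a - b, ⟨hsub ▸ hcone, fun hmem => hnot ⟨a - b, hmem, hsub⟩⟩, ?_⟩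
    exact (tsub_add_cancel_of_le hle).symm
  · rintro ⟨haS, g, ⟨hcone, hgS⟩, rfl⟩
    have hsub : toQ (g + b) - toQ b = toQ g := by rw [toQ_add, add_sub_cancel_right]
    refine ⟨haS, hsub ▸ hcone, ?_⟩
    rintro ⟨s, hsS, hs⟩
    exact hgS (toQ_injective (hs.trans hsub) ▸ hsS)

lemma add_mem_apery_of_mem_PF {g : Fin d → ℕ} (hg : g ∈ PF S) (hb : b ∈ S) (hb0 : b ≠ 0) :
    g + b ∈ Apery S b :=
  mem_apery_iff.2 ⟨hg.2 b hb hb0, g, hg.1, rfl⟩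

lemma maximalIn_apery_of_mem_PF {g : Fin d → ℕ} (hg : g ∈ PF S) (hb : b ∈ S) (hb0 : b ≠ 0) :
    MaximalIn S (Apery S b) (g + b) := by
  refine ⟨add_mem_apery_of_mem_PF hg hb hb0, ?_⟩
  rintro a ha hne ⟨s, hsS, rfl⟩
  obtain ⟨-, h, hh, hgsb⟩ := mem_apery_iff.1 ha
  have hs0 : s ≠ 0 := by rintro rfl; simp at hne
  have hgs : h = g + s := add_right_cancel (hgsb.symm.trans (add_right_comm g b s))
  exact hh.2 (hgs ▸ hg.2 s hsS hs0)

lemma exists_mem_PF_of_maximalIn_apery {a : Fin d → ℕ} (ha : MaximalIn S (Apery S b) a) :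
    ∃ g ∈ PF S, a = g + b := by
  obtain ⟨haS, g, hg, rfl⟩ := mem_apery_iff.1 ha.1
  refine ⟨g, ⟨hg, fun s hsS hs0 => ?_⟩, rfl⟩
  by_contra hgs
  have hbigger : g + b + s ∈ Apery S b :=
    mem_apery_iff.2 ⟨S.add_mem haS hsS, g + s, add_mem_gaps hg hsS hgs, add_right_comm g b s⟩
  exact ha.2 _ hbigger (by simpa using hs0) ⟨s, hsS, rfl⟩

lemma maximalIn_apery_iff (hb : b ∈ S) (hb0 : b ≠ 0) {a : Fin d → ℕ} :
    MaximalIn S (Apery S b) a ↔ ∃ g ∈ PF S, a = g + b :=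
  ⟨exists_mem_PF_of_maximalIn_apery, fun ⟨_, hg, ha⟩ => ha ▸ maximalIn_apery_of_mem_PF hg hb hb0⟩

end Apery

/-- `PF(S) ≠ ∅` iff `Ap(S, b)` has a `≼_S`-maximal element, and
`PF(S) = {a - b : a ≼_S-maximal in Ap(S, b)}` (differences in `ℤ^d`). -/
theorem pf_eq_maximals_apery {d : ℕ} (S : AddSubmonoid (Fin d → ℕ))
    (b : Fin d → ℕ) (hb : b ∈ S) (hb0 : b ≠ 0) :
    ((PF S).Nonempty ↔ ∃ a, MaximalIn S (Apery S b) a) ∧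
      natToZ '' PF S =
        {z | ∃ a, MaximalIn S (Apery S b) a ∧ z = natToZ a - natToZ b} := by
  simp only [maximalIn_apery_iff hb hb0]
  constructor
  · exact ⟨fun ⟨g, hg⟩ => ⟨g + b, g, hg, rfl⟩, fun ⟨_, g, hg, _⟩ => ⟨g, hg⟩⟩
  · ext z
    constructor
    · rintro ⟨g, hg, rfl⟩
      exact ⟨g + b, ⟨g, hg, rfl⟩, (natToZ_add_sub_right g b).symm⟩
    · rintro ⟨_, ⟨g, hg, rfl⟩, rfl⟩
      exact ⟨g, hg, (natToZ_add_sub_right g b).symm⟩
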